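/- Let v : E → F be a φ-isometry that is φ-adjointable with φ-adjoint v*. Then vv* : F → F is a self-adjoint idempotent (i.e. an orthogonal projection onto the range of v), so that the range vE = vv*F is a complemented submodule of F with complement (id_F − vv*)F. -/

import Mathlib

open scoped RightActions InnerProductSpace

/-- The right Hilbert C⋆-module class as it stood in the older Mathlib (`CStarModule` there),
with a right action `SMul Aᵐᵒᵖ E`. -/
class RightCStarModule (A : outParam <| Type*) (E : Type*) [NonUnitalSemiring A] [StarRing A]
    [Module ℂ A] [AddCommGroup E] [Module ℂ E] [PartialOrder A] [SMul Aᵐᵒᵖ E] [Norm A] [Norm E]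
    extends Inner A E where
  inner_add_right {x} {y} {z} : inner x (y + z) = inner x y + inner x z
  inner_self_nonneg {x} : 0 ≤ inner x x
  inner_self {x} : inner x x = 0 ↔ x = 0
  inner_op_smul_right {a : A} {x y : E} : inner x (y <• a) = inner x y * a
  inner_smul_right_complex {z : ℂ} {x} {y} : inner x (z • y) = z • inner x y
  star_inner x y : star (inner x y) = inner y x
  norm_eq_sqrt_norm_inner_self x : ‖x‖ = √‖inner x x‖

/-- A *-homomorphism `φ : B → C` is nondegenerate if the closed linear span of `φ(B)·C`
is all of `C`. -/
def Nondegenerate {B C : Type*} [NonUnitalCStarAlgebra B] [NonUnitalCStarAlgebra C]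
    (φ : B →⋆ₙₐ[ℂ] C) : Prop :=
  closure (Submodule.span ℂ {c : C | ∃ b c₀, c = φ b * c₀} : Set C) = Set.univ

/-- The range ideal `B_E` of a Hilbert `B`-module `E`: the closed linear span of all
inner products `⟪x, y⟫`. -/
def rangeIdeal (B E : Type*) [NonUnitalCStarAlgebra B] [PartialOrder B] [StarOrderedRing B]
    [NormedAddCommGroup E] [NormedSpace ℂ E] [SMul Bᵐᵒᵖ E] [RightCStarModule B E] : Set B :=
  closure (Submodule.span ℂ {b : B | ∃ x y : E, b = ⟪x, y⟫_B} : Set B)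

variable {B C D E F G : Type*}
  [NonUnitalCStarAlgebra B] [PartialOrder B] [StarOrderedRing B]
  [NonUnitalCStarAlgebra C] [PartialOrder C] [StarOrderedRing C]
  [NonUnitalCStarAlgebra D] [PartialOrder D] [StarOrderedRing D]
  [NormedAddCommGroup E] [NormedSpace ℂ E] [SMul Bᵐᵒᵖ E] [RightCStarModule B E]
  [NormedAddCommGroup F] [NormedSpace ℂ F] [SMul Cᵐᵒᵖ F] [RightCStarModule C F]
  [NormedAddCommGroup G] [NormedSpace ℂ G] [SMul Dᵐᵒᵖ G] [RightCStarModule D G]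

namespace RightCStarModule

variable {A M : Type*} [NonUnitalRing A] [StarRing A] [Module ℂ A] [PartialOrder A] [Norm A]
  [AddCommGroup M] [Module ℂ M] [SMul Aᵐᵒᵖ M] [Norm M] [RightCStarModule A M]

theorem inner_sub_right (x y z : M) : ⟪x, y - z⟫_A = ⟪x, y⟫_A - ⟪x, z⟫_A :=
  eq_sub_of_add_eq <| by rw [← inner_add_right, sub_add_cancel]

theorem inner_sub_left (x y z : M) : ⟪y - z, x⟫_A = ⟪y, x⟫_A - ⟪z, x⟫_A := by
  rw [← star_inner x, inner_sub_right, star_sub, star_inner, star_inner]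

theorem eq_of_inner_eq_inner {a b : M} (ha : ⟪a, a⟫_A = ⟪a, b⟫_A) (hb : ⟪b, a⟫_A = ⟪b, b⟫_A) :
    a = b := by
  rw [← sub_eq_zero, ← inner_self (A := A), inner_sub_left, inner_sub_right, inner_sub_right,
    ha, hb, sub_self, sub_self, sub_self]

end RightCStarModule

open RightCStarModule

section PhiAdjoint

variable {A₁ A₂ M₁ M₂ : Type*}
  [NonUnitalRing A₁] [StarRing A₁] [Module ℂ A₁] [PartialOrder A₁] [Norm A₁]
  [NonUnitalRing A₂] [StarRing A₂] [Module ℂ A₂] [PartialOrder A₂] [Norm A₂]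
  [AddCommGroup M₁] [Module ℂ M₁] [SMul A₁ᵐᵒᵖ M₁] [Norm M₁] [RightCStarModule A₁ M₁]
  [AddCommGroup M₂] [Module ℂ M₂] [SMul A₂ᵐᵒᵖ M₂] [Norm M₂] [RightCStarModule A₂ M₂]
  {v : M₁ → M₂} {vs : M₂ → M₁}

theorem inner_map_map_adjoint (φ : A₁ →⋆ₙₐ[ℂ] A₂)
    (hiso : ∀ x y : M₁, ⟪v x, v y⟫_A₂ = φ ⟪x, y⟫_A₁)
    (hadj : ∀ (x : M₁) (y : M₂), ⟪v x, y⟫_A₂ = φ ⟪x, vs y⟫_A₁) (x : M₁) (y : M₂) :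
    ⟪v x, v (vs y)⟫_A₂ = ⟪v x, y⟫_A₂ := by
  rw [hiso, hadj]

theorem inner_map_adjoint_left (φ : A₁ →⋆ₙₐ[ℂ] A₂)
    (hadj : ∀ (x : M₁) (y : M₂), ⟪v x, y⟫_A₂ = φ ⟪x, vs y⟫_A₁) (x y : M₂) :
    ⟪v (vs x), y⟫_A₂ = ⟪x, v (vs y)⟫_A₂ := by
  rw [hadj, ← star_inner (v (vs y)), hadj, ← map_star, star_inner]

/-- `v (vs (v x))` and `v x` have the same inner products with each other and with themselves,
so their difference has zero inner square. -/
theorem map_adjoint_map (φ : A₁ →⋆ₙₐ[ℂ] A₂)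
    (hiso : ∀ x y : M₁, ⟪v x, v y⟫_A₂ = φ ⟪x, y⟫_A₁)
    (hadj : ∀ (x : M₁) (y : M₂), ⟪v x, y⟫_A₂ = φ ⟪x, vs y⟫_A₁) (x : M₁) :
    v (vs (v x)) = v x :=
  eq_of_inner_eq_inner (inner_map_map_adjoint φ hiso hadj _ _)
    (inner_map_map_adjoint φ hiso hadj _ _)

end PhiAdjoint

theorem phi_isometry_adjoint_projection_general (φ : B →⋆ₙₐ[ℂ] C)
    (v : E → F) (vs : F → E)
    (hiso : ∀ x y : E, ⟪v x, v y⟫_C = φ ⟪x, y⟫_B)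
    (hadj : ∀ (x : E) (y : F), ⟪v x, y⟫_C = φ ⟪x, vs y⟫_B) :
    (∀ y : F, v (vs (v (vs y))) = v (vs y)) ∧
    (∀ x y : F, ⟪v (vs x), y⟫_C = ⟪x, v (vs y)⟫_C) ∧
    (Set.range (fun y : F => v (vs y)) = Set.range v) ∧
    (∀ x y : F, ⟪v (vs x), y - v (vs y)⟫_C = 0) := by
  refine ⟨fun y => map_adjoint_map φ hiso hadj (vs y), inner_map_adjoint_left φ hadj, ?_,
    fun x y => by
      rw [RightCStarModule.inner_sub_right, inner_map_map_adjoint φ hiso hadj, sub_self]⟩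
  refine subset_antisymm (Set.range_comp_subset_range vs v) ?_
  rintro _ ⟨x, rfl⟩
  exact ⟨v x, map_adjoint_map φ hiso hadj x⟩

/-- For an adjointable φ-isometry v, the operator v v* is a self-adjoint idempotent
projecting onto the range of v, so the range of v is complemented. -/
theorem phi_isometry_adjoint_projection (φ : B →⋆ₙₐ[ℂ] C) (hφ : Nondegenerate φ)
    (v : E → F) (vs : F → E)
    (hiso : ∀ x y : E, ⟪v x, v y⟫_C = φ ⟪x, y⟫_B)
    (hadj : ∀ (x : E) (y : F), ⟪v x, y⟫_C = φ ⟪x, vs y⟫_B) :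
    (∀ y : F, v (vs (v (vs y))) = v (vs y)) ∧
    (∀ x y : F, ⟪v (vs x), y⟫_C = ⟪x, v (vs y)⟫_C) ∧
    (Set.range (fun y : F => v (vs y)) = Set.range v) ∧
    (∀ x y : F, ⟪v (vs x), y - v (vs y)⟫_C = 0) :=
  phi_isometry_adjoint_projection_general φ v vs hiso hadj
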